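/- arXiv:1112.5891 — 8 statements merged into one kernel-verified Lean document; each statement's English description precedes it below -/
import Mathlib

section
/- Let (X,p) be a 0-complete partial metric space, and let A and B be nonempty sequentially closed subsets of X with X = A ∪ B. Let T : X → X satisfy (C1) T(A) ⊆ B and T(B) ⊆ A, and (C2) there exists α ∈ (0,1) such that p(Tx,Ty) ≤ α·p(x,y) for all x ∈ A and all y ∈ B. Then T has a unique fixed point, and this fixed point lies in A ∩ B (in particular A ∩ B ≠ ∅). -/
/-!
The orbit `T^[n] a` of a point `a ∈ A` alternates between `A` and `B`, so (C2) makes consecutive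
distances along it shrink geometrically and the orbit is 0-Cauchy. Its limit `z` has `p z z = 0`
and is a limit of the even terms (in `A`) and of the odd terms (in `B`), hence `z ∈ A ∩ B`; such a
point is contracted against every point of `X = A ∪ B`. Since `p z z = 0`, `p y (x n) → p y z`,
so `p (T z) z ≤ α * p z z = 0`, and a second fixed point `w` would satisfy `p w z ≤ α * p w z`.
-/

open Filter Topology

/-- A partial metric on a type `X`. -/
structure IsPartialMetric {X : Type*} (p : X → X → ℝ) : Prop where
  nonneg : ∀ x y, 0 ≤ p x y
  symm : ∀ x y, p x y = p y x
  eq_of : ∀ x y, p x x = p x y → p x y = p y y → x = y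
  self_le : ∀ x y, p x x ≤ p x y
  triangle : ∀ x y z, p x z + p y y ≤ p x y + p y z

/-- A sequence `x` converges to `a` in the partial metric `p`:
`lim_{n→∞} p(a, x n) = p(a,a)`. -/
def PConverges {X : Type*} (p : X → X → ℝ) (x : ℕ → X) (a : X) : Prop :=
  Tendsto (fun n => p a (x n)) atTop (𝓝 (p a a))

/-- A sequence is `0`-Cauchy: `lim_{m,n→∞} p(x n, x m) = 0`. -/
def PZeroCauchy {X : Type*} (p : X → X → ℝ) (x : ℕ → X) : Prop :=
  Tendsto (fun mn : ℕ × ℕ => p (x mn.1) (x mn.2)) atTop (𝓝 0)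

/-- `(X,p)` is `0`-complete. -/
def PZeroComplete {X : Type*} (p : X → X → ℝ) : Prop :=
  ∀ x : ℕ → X, PZeroCauchy p x → ∃ a, PConverges p x a ∧ p a a = 0

/-- A set is sequentially closed with respect to `p`-convergence. -/
def SeqClosed {X : Type*} (p : X → X → ℝ) (A : Set X) : Prop :=
  ∀ (x : ℕ → X) (a : X), (∀ n, x n ∈ A) → PConverges p x a → a ∈ A

/-- A sequence is Cauchy in `(X,p)`: the double limit `lim_{m,n→∞} p(x n, x m)`
exists (finite). -/
def PCauchy {X : Type*} (p : X → X → ℝ) (x : ℕ → X) : Prop :=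
  ∃ L : ℝ, Tendsto (fun mn : ℕ × ℕ => p (x mn.1) (x mn.2)) atTop (𝓝 L)

/-- `(X,p)` is complete: every Cauchy sequence converges to some `a` with
`p(a,a) = lim_{m,n→∞} p(x n, x m)`. -/
def PComplete {X : Type*} (p : X → X → ℝ) : Prop :=
  ∀ x : ℕ → X, PCauchy p x → ∃ a, PConverges p x a ∧
    Tendsto (fun mn : ℕ × ℕ => p (x mn.1) (x mn.2)) atTop (𝓝 (p a a))

/-- Continuity of `T : X → X` with respect to the open `p`-balls. -/
def PMContinuous {X : Type*} (p : X → X → ℝ) (T : X → X) : Prop :=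
  ∀ x₀ : X, ∀ ε > (0:ℝ), ∃ δ > (0:ℝ), ∀ y,
    p x₀ y < p x₀ x₀ + δ → p (T x₀) (T y) < p (T x₀) (T x₀) + ε

/-- A set `A` is `0`-compact: every sequence in `A` has a subsequence converging
to some `a ∈ A` with `lim_{n→∞} p(x (k n), a) = p(a,a) = 0`. -/
def PZeroCompact {X : Type*} (p : X → X → ℝ) (A : Set X) : Prop :=
  ∀ x : ℕ → X, (∀ n, x n ∈ A) → ∃ (k : ℕ → ℕ) (a : X), StrictMono k ∧ a ∈ A ∧
    Tendsto (fun n => p (x (k n)) a) atTop (𝓝 (p a a)) ∧ p a a = 0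

theorem le_geometric_of_succ_le_mul {d : ℕ → ℝ} {α : ℝ} (hα : 0 ≤ α)
    (h : ∀ n, d (n + 1) ≤ α * d n) (n : ℕ) : d n ≤ d 0 * α ^ n := by
  induction n with
  | zero => simp
  | succ n ih =>
    calc d (n + 1) ≤ α * d n := h n
      _ ≤ α * (d 0 * α ^ n) := mul_le_mul_of_nonneg_left ih hα
      _ = d 0 * α ^ (n + 1) := by ring

namespace IsPartialMetric

variable {X : Type*} {p : X → X → ℝ}

theorem eq_of_eq_zero (hp : IsPartialMetric p) {x y : X} (h : p x y = 0) : x = y := by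
  have hx := hp.self_le x y
  have hy := hp.self_le y x
  rw [hp.symm y x] at hy
  exact hp.eq_of x y (by linarith [hp.nonneg x x]) (by linarith [hp.nonneg y y])

theorem tendsto_of_pConverges (hp : IsPartialMetric p) {x : ℕ → X} {z : X}
    (hx : PConverges p x z) (hz : p z z = 0) (y : X) :
    Tendsto (fun n => p y (x n)) atTop (𝓝 (p y z)) := by
  rw [PConverges, hz] at hx
  have hupper : ∀ n, p y (x n) ≤ p y z + p z (x n) := fun n => by
    linarith [hp.triangle y z (x n), hp.nonneg z z]
  have hlower : ∀ n, p y z - p z (x n) ≤ p y (x n) := fun n => by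
    linarith [hp.triangle y (x n) z, hp.nonneg (x n) (x n), hp.symm (x n) z]
  refine tendsto_of_tendsto_of_tendsto_of_le_of_le ?_ ?_ hlower hupper
  · simpa using tendsto_const_nhds.sub hx
  · simpa using tendsto_const_nhds.add hx

theorem le_geometric_tail (hp : IsPartialMetric p) {x : ℕ → X} {C α : ℝ} (hα₀ : 0 ≤ α)
    (hα₁ : α < 1) (h : ∀ n, p (x n) (x (n + 1)) ≤ C * α ^ n) (k n : ℕ) :
    p (x n) (x (n + k)) ≤ C * α ^ n / (1 - α) := by
  rw [le_div_iff₀ (sub_pos.2 hα₁)]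
  induction k generalizing n with
  | zero =>
    rw [Nat.add_zero]
    nlinarith [hp.self_le (x n) (x (n + 1)), h n, hp.nonneg (x n) (x n)]
  | succ k ih =>
    rw [show n + (k + 1) = n + 1 + k by omega]
    have htri := hp.triangle (x n) (x (n + 1)) (x (n + 1 + k))
    have hstep := h n
    have htail := ih (n + 1)
    rw [pow_succ] at htail
    nlinarith [hp.nonneg (x (n + 1)) (x (n + 1))]

theorem pZeroCauchy_of_le_geometric (hp : IsPartialMetric p) {x : ℕ → X} {C α : ℝ}
    (hα₀ : 0 ≤ α) (hα₁ : α < 1) (h : ∀ n, p (x n) (x (n + 1)) ≤ C * α ^ n) :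
    PZeroCauchy p x := by
  have hbound : ∀ m n, p (x m) (x n) ≤ C * α ^ min m n / (1 - α) := by
    intro m n
    rcases le_total m n with hmn | hnm
    · obtain ⟨k, rfl⟩ := Nat.exists_eq_add_of_le hmn
      simpa using hp.le_geometric_tail hα₀ hα₁ h k m
    · obtain ⟨k, rfl⟩ := Nat.exists_eq_add_of_le hnm
      simpa [hp.symm (x (n + k))] using hp.le_geometric_tail hα₀ hα₁ h k n
  have hmin : Tendsto (fun mn : ℕ × ℕ => min mn.1 mn.2) atTop atTop :=
    tendsto_atTop_atTop_of_monotone (monotone_fst.min monotone_snd) fun b => ⟨(b, b), by simp⟩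
  have hlim : Tendsto (fun mn : ℕ × ℕ => C * α ^ min mn.1 mn.2 / (1 - α)) atTop (𝓝 0) := by
    simpa using
      (((tendsto_pow_atTop_nhds_zero_of_lt_one hα₀ hα₁).comp hmin).const_mul C).div_const (1 - α)
  exact tendsto_of_tendsto_of_tendsto_of_le_of_le tendsto_const_nhds hlim
    (fun mn => hp.nonneg _ _) (fun mn => hbound mn.1 mn.2)

end IsPartialMetric

section Cyclic

variable {X : Type*} {A B : Set X} {T : X → X}

theorem iterate_mem_of_cyclic (hTA : Set.MapsTo T A B) (hTB : Set.MapsTo T B A) {a : X}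
    (ha : a ∈ A) (n : ℕ) : T^[2 * n] a ∈ A ∧ T^[2 * n + 1] a ∈ B := by
  have heven : T^[2 * n] a ∈ A := by
    rw [Function.iterate_mul]
    exact (hTB.comp hTA).iterate n ha
  refine ⟨heven, ?_⟩
  rw [Function.iterate_succ_apply']
  exact hTA heven

variable {p : X → X → ℝ} {α : ℝ}

theorem IsPartialMetric.iterate_step_le_of_cyclic (hp : IsPartialMetric p)
    (hTA : Set.MapsTo T A B) (hTB : Set.MapsTo T B A)
    (hcontr : ∀ x ∈ A, ∀ y ∈ B, p (T x) (T y) ≤ α * p x y) {a : X} (ha : a ∈ A) (n : ℕ) :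
    p (T^[n + 1] a) (T^[n + 1 + 1] a) ≤ α * p (T^[n] a) (T^[n + 1] a) := by
  simp only [Function.iterate_succ_apply' T (n + 1), Function.iterate_succ_apply' T n]
  obtain ⟨k, rfl | rfl⟩ := Nat.even_or_odd' n
  · have hy := (iterate_mem_of_cyclic hTA hTB ha k).1
    exact hcontr _ hy _ (hTA hy)
  · have hy := (iterate_mem_of_cyclic hTA hTB ha k).2
    rw [hp.symm, hp.symm (T^[2 * k + 1] a)]
    exact hcontr _ (hTB hy) _ hy

theorem IsPartialMetric.contraction_of_mem_inter (hp : IsPartialMetric p)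
    (hcontr : ∀ x ∈ A, ∀ y ∈ B, p (T x) (T y) ≤ α * p x y) {z w : X} (hz : z ∈ A ∩ B)
    (hw : w ∈ A ∪ B) : p (T z) (T w) ≤ α * p z w := by
  rcases hw with hwA | hwB
  · rw [hp.symm, hp.symm z]
    exact hcontr w hwA z hz.2
  · exact hcontr z hz.1 w hwB

end Cyclic

theorem cyclic_contraction_two_sets_general {X : Type*} (p : X → X → ℝ)
    (hp : IsPartialMetric p) (hcomp : PZeroComplete p)
    (A B : Set X) (hA : A.Nonempty)
    (hAcl : SeqClosed p A) (hBcl : SeqClosed p B) (hX : A ∪ B = Set.univ)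
    (T : X → X) (hTA : ∀ x ∈ A, T x ∈ B) (hTB : ∀ y ∈ B, T y ∈ A)
    (α : ℝ) (hα : α ∈ Set.Ioo (0:ℝ) 1)
    (hcontr : ∀ x ∈ A, ∀ y ∈ B, p (T x) (T y) ≤ α * p x y) :
    ∃ z, T z = z ∧ z ∈ A ∩ B ∧ ∀ w, T w = w → w = z := by
  obtain ⟨hα₀, hα₁⟩ := hα
  obtain ⟨a, ha⟩ := hA
  have hmem := iterate_mem_of_cyclic hTA hTB ha
  have hcauchy : PZeroCauchy p (fun n => T^[n] a) :=
    hp.pZeroCauchy_of_le_geometric hα₀.le hα₁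
      (le_geometric_of_succ_le_mul hα₀.le (hp.iterate_step_le_of_cyclic hTA hTB hcontr ha))
  obtain ⟨z, hzconv, hzz⟩ := hcomp _ hcauchy
  have hzA : z ∈ A := hAcl _ z (fun n => (hmem n).1)
    (hzconv.comp (tendsto_atTop_atTop_of_monotone (fun _ _ _ => by omega) fun b => ⟨b, by omega⟩))
  have hzB : z ∈ B := hBcl _ z (fun n => (hmem n).2)
    (hzconv.comp (tendsto_atTop_atTop_of_monotone (fun _ _ _ => by omega) fun b => ⟨b, by omega⟩))
  have hcontr' : ∀ w, p (T z) (T w) ≤ α * p z w := fun w =>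
    hp.contraction_of_mem_inter hcontr ⟨hzA, hzB⟩ (hX ▸ Set.mem_univ w)
  have hTz : T z = z := by
    have hle : p (T z) z ≤ α * p z z :=
      le_of_tendsto_of_tendsto'
        ((hp.tendsto_of_pConverges hzconv hzz (T z)).comp (tendsto_add_atTop_nat 1))
        ((hp.tendsto_of_pConverges hzconv hzz z).const_mul α)
        fun n => by simpa only [Function.comp, Function.iterate_succ_apply'] using hcontr' _
    exact hp.eq_of_eq_zero (le_antisymm (by simpa [hzz] using hle) (hp.nonneg _ _))
  refine ⟨z, hTz, ⟨hzA, hzB⟩, fun w hw => hp.eq_of_eq_zero ?_⟩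
  have hle : p w z ≤ α * p w z := by simpa [hw, hTz, hp.symm z w] using hcontr' w
  nlinarith [hp.nonneg w z]

/-- cyclical Banach contraction principle for two sets. -/
theorem cyclic_contraction_two_sets {X : Type*} (p : X → X → ℝ)
    (hp : IsPartialMetric p) (hcomp : PZeroComplete p)
    (A B : Set X) (hA : A.Nonempty) (hB : B.Nonempty)
    (hAcl : SeqClosed p A) (hBcl : SeqClosed p B) (hX : A ∪ B = Set.univ)
    (T : X → X) (hTA : ∀ x ∈ A, T x ∈ B) (hTB : ∀ y ∈ B, T y ∈ A)
    (α : ℝ) (hα : α ∈ Set.Ioo (0:ℝ) 1)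
    (hcontr : ∀ x ∈ A, ∀ y ∈ B, p (T x) (T y) ≤ α * p x y) :
    ∃ z, T z = z ∧ z ∈ A ∩ B ∧ ∀ w, T w = w → w = z :=
  cyclic_contraction_two_sets_general p hp hcomp A B hA hAcl hBcl hX T hTA hTB α hα hcontr
end

section
/- Let (X,p) be a partial metric space and let A_1, …, A_k be nonempty sequentially closed subsets of X, at least one of which is 0-compact. Suppose T : A_1 ∪ … ∪ A_k → A_1 ∪ … ∪ A_k satisfies (1) T(A_i) ⊆ A_{i+1} for 1 ≤ i ≤ k (where A_{k+1} = A_1), and (2) p(Tx,Ty) < p(x,y) for all x ∈ A_i and y ∈ A_{i+1} with x ≠ y, 1 ≤ i ≤ k. Then T has a unique fixed point, which lies in A_1 ∩ … ∩ A_k. -/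
/-!
The heart of the proof is that two consecutive sets `A j`, `A (j + 1)` of a cyclic contraction
must meet when one of the sets is `0`-compact. Otherwise `T` contracts strictly on all consecutive
pairs, so the infima `δ j` of `p` over `A j × A (j + 1)` decrease along the cycle and hence are
all equal to some `δ`; two successive extractions of `0`-convergent subsequences from the compact
set produce a consecutive pair at distance at most `δ`, and one more application of `T` pushes it
below `δ`.

The sets `A i ∩ A (i + 1)` again form a cyclic contraction with the same closedness and
compactness properties, so after `k` such steps `⋂ i, A i` is nonempty. It is `T`-invariant and
`0`-compact, and `T` contracts on it; by Edelstein's argument the displacement `x ↦ p x (T x)`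
attains its infimum there, which forces a fixed point.
-/

open Filter Topology

open Set Function

open Fin.NatCast in
theorem Fin.cyclic_induction {k : ℕ} [NeZero k] {P : Fin k → Prop}
    (h : ∀ i, P i → P (i + 1)) {j : Fin k} (hj : P j) (i : Fin k) : P i := by
  have hP : ∀ n : ℕ, P (j + n) := by
    intro n
    induction n with
    | zero => simpa using hj
    | succ n ih => simpa [add_assoc] using h _ ih
  simpa using hP (i - j).val

theorem Fin.le_of_forall_apply_add_one_le {k : ℕ} [NeZero k] {α : Type*} [Preorder α]
    {f : Fin k → α} (h : ∀ i, f (i + 1) ≤ f i) (i j : Fin k) : f j ≤ f i :=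
  Fin.cyclic_induction (P := fun j => f j ≤ f i) (fun j hj => (h j).trans hj) le_rfl j

section

variable {X : Type*} {p : X → X → ℝ}

theorem IsPartialMetric.le_add (hp : IsPartialMetric p) (x y z : X) :
    p x z ≤ p x y + p y z := by
  linarith [hp.triangle x y z, hp.nonneg y y]

theorem SeqClosed.inter {A B : Set X} (hA : SeqClosed p A) (hB : SeqClosed p B) :
    SeqClosed p (A ∩ B) :=
  fun x a hx ha => ⟨hA x a (fun n => (hx n).1) ha, hB x a (fun n => (hx n).2) ha⟩

theorem SeqClosed.iInter {ι : Type*} {A : ι → Set X} (hA : ∀ i, SeqClosed p (A i)) :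
    SeqClosed p (⋂ i, A i) :=
  fun x a hx ha => mem_iInter.2 fun i => hA i x a (fun n => mem_iInter.1 (hx n) i) ha

namespace PZeroCompact

variable {C : Set X}

theorem self_eq_zero (hC : PZeroCompact p C) (hp : IsPartialMetric p) {w : X} (hw : w ∈ C) :
    p w w = 0 := by
  obtain ⟨-, a, -, -, ha, ha0⟩ := hC (fun _ => w) (fun _ => hw)
  have hwa : p w a = 0 := (tendsto_const_nhds_iff.1 ha).trans ha0
  linarith [hp.self_le w a, hp.nonneg w w]

theorem exists_subseq_tendsto_zero (hC : PZeroCompact p C) (hp : IsPartialMetric p)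
    {x : ℕ → X} (hx : ∀ n, x n ∈ C) :
    ∃ c ∈ C, ∃ φ : ℕ → ℕ, StrictMono φ ∧ Tendsto (fun n => p c (x (φ n))) atTop (𝓝 0) := by
  obtain ⟨φ, c, hφ, hc, hlim, hc0⟩ := hC x hx
  rw [hc0] at hlim
  exact ⟨c, hc, φ, hφ, hlim.congr fun n => hp.symm _ _⟩

theorem mono (hC : PZeroCompact p C) (hp : IsPartialMetric p) {S : Set X} (hSC : S ⊆ C)
    (hS : SeqClosed p S) : PZeroCompact p S := by
  intro x hx
  obtain ⟨φ, a, hφ, -, hlim, ha0⟩ := hC x fun n => hSC (hx n)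
  exact ⟨φ, a, hφ, hS _ a (fun n => hx (φ n)) (hlim.congr fun n => hp.symm _ _), hlim, ha0⟩

theorem exists_fixedPt (hC : PZeroCompact p C) (hp : IsPartialMetric p) (hne : C.Nonempty)
    {T : X → X} (hT : MapsTo T C C) (hlt : ∀ x ∈ C, ∀ y ∈ C, x ≠ y → p (T x) (T y) < p x y) :
    ∃ z ∈ C, IsFixedPt T z := by
  have hle : ∀ x ∈ C, ∀ y ∈ C, p (T x) (T y) ≤ p x y := by
    intro x hx y hy
    rcases eq_or_ne x y with rfl | hxy
    · rw [hC.self_eq_zero hp (hT hx)]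
      exact hp.nonneg x x
    · exact (hlt x hx y hy hxy).le
  have hbdd : BddBelow ((fun x => p x (T x)) '' C) :=
    ⟨0, by rintro _ ⟨x, -, rfl⟩; exact hp.nonneg _ _⟩
  set m := sInf ((fun x => p x (T x)) '' C)
  have hm : ∀ x ∈ C, m ≤ p x (T x) := fun x hx => csInf_le hbdd (mem_image_of_mem _ hx)
  obtain ⟨d, -, hd, hdC⟩ := exists_seq_tendsto_sInf (hne.image _) hbdd
  choose x hxC hx using hdC
  obtain ⟨z, hz, φ, hφ, hzx⟩ := hC.exists_subseq_tendsto_zero hp hxC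
  have hzm : p z (T z) ≤ m := by
    have hlim := (hzx.add (hd.comp hφ.tendsto_atTop)).add hzx
    rw [zero_add, add_zero] at hlim
    refine ge_of_tendsto' hlim fun n => ?_
    have hTx := hle _ (hxC (φ n)) z hz
    rw [hp.symm (x (φ n)) z] at hTx
    have hxn := hx (φ n)
    simp only [comp_apply]
    linarith [hp.le_add z (x (φ n)) (T z), hp.le_add (x (φ n)) (T (x (φ n))) (T z)]
  refine ⟨z, hz, by_contra fun hzT => ?_⟩
  linarith [hlt z hz (T z) (hT hz) (Ne.symm hzT), hm (T z) (hT hz)]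

theorem exists_le_sInf_image2 (hC : PZeroCompact p C) (hp : IsPartialMetric p) {B : Set X}
    (hB : B.Nonempty) {T : X → X} (hTB : MapsTo T B C)
    (hle : ∀ x ∈ B, ∀ y ∈ C, p (T x) (T y) ≤ p x y) :
    ∃ w ∈ C, ∃ z ∈ C, p w (T z) ≤ sInf (image2 p B C) := by
  have hbdd : BddBelow (image2 p B C) := ⟨0, by rintro _ ⟨x, -, y, -, rfl⟩; exact hp.nonneg x y⟩
  obtain ⟨d, -, hd, hdBC⟩ :=
    exists_seq_tendsto_sInf (hB.image2 ((hB.image T).mono hTB.image_subset)) hbdd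
  choose u hu v hv huv using hdBC
  obtain ⟨z, hz, φ, hφ, hzv⟩ := hC.exists_subseq_tendsto_zero hp hv
  obtain ⟨w, hw, ψ, hψ, hwu⟩ := hC.exists_subseq_tendsto_zero hp fun n => hTB (hu (φ n))
  refine ⟨w, hw, z, hz, ?_⟩
  have hlim := (hwu.add (hd.comp (hφ.comp hψ).tendsto_atTop)).add (hzv.comp hψ.tendsto_atTop)
  rw [zero_add, add_zero] at hlim
  refine ge_of_tendsto' hlim fun n => ?_
  have hTu := hle _ (hu (φ (ψ n))) z hz
  have huvn := huv (φ (ψ n))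
  simp only [comp_apply]
  linarith [hp.le_add w (T (u (φ (ψ n)))) (T z), hp.le_add (u (φ (ψ n))) (v (φ (ψ n))) z,
    hp.symm (v (φ (ψ n))) z]

end PZeroCompact

structure CyclicContraction (p : X → X → ℝ) {k : ℕ} [NeZero k] (A : Fin k → Set X)
    (T : X → X) : Prop where
  mapsTo : ∀ i, MapsTo T (A i) (A (i + 1))
  lt : ∀ i, ∀ x ∈ A i, ∀ y ∈ A (i + 1), x ≠ y → p (T x) (T y) < p x y

namespace CyclicContraction

variable {k : ℕ} [NeZero k] {A : Fin k → Set X} {T : X → X}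

theorem inter_add_one (h : CyclicContraction p A T) :
    CyclicContraction p (fun i => A i ∩ A (i + 1)) T :=
  ⟨fun i _ hx => ⟨h.mapsTo i hx.1, h.mapsTo (i + 1) hx.2⟩,
    fun i x hx y hy => h.lt i x hx.1 y hy.1⟩

theorem exists_inter_add_one_nonempty (h : CyclicContraction p A T) (hp : IsPartialMetric p)
    (hne : ∀ i, (A i).Nonempty) {i₀ : Fin k} (hcpt : PZeroCompact p (A i₀)) :
    ∃ j, (A j ∩ A (j + 1)).Nonempty := by
  by_contra! hdisj
  have hxy : ∀ j, ∀ x ∈ A j, ∀ y ∈ A (j + 1), x ≠ y := by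
    rintro j x hx _ hy rfl
    exact (hdisj j).subset ⟨hx, hy⟩
  set δ : Fin k → ℝ := fun j => sInf (image2 p (A j) (A (j + 1)))
  have hδ_le : ∀ j, ∀ x ∈ A j, ∀ y ∈ A (j + 1), δ j ≤ p x y := fun j x hx y hy =>
    csInf_le ⟨0, by rintro _ ⟨a, -, b, -, rfl⟩; exact hp.nonneg a b⟩ (mem_image2_of_mem hx hy)
  have hδ_succ : ∀ j, δ (j + 1) ≤ δ j := by
    refine fun j => le_csInf ((hne j).image2 (hne (j + 1))) ?_
    rintro _ ⟨x, hx, y, hy, rfl⟩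
    exact (hδ_le _ _ (h.mapsTo j hx) _ (h.mapsTo _ hy)).trans
      (h.lt j x hx y hy (hxy j x hx y hy)).le
  obtain ⟨j, rfl⟩ : ∃ j, j + 1 = i₀ := ⟨i₀ - 1, sub_add_cancel _ _⟩
  obtain ⟨w, hw, z, hz, hwz⟩ := hcpt.exists_le_sInf_image2 hp (hne j) (h.mapsTo j)
    fun x hx y hy => (h.lt j x hx y hy (hxy j x hx y hy)).le
  have hTz := h.mapsTo _ hz
  have hlt := h.lt _ w hw _ hTz (hxy _ w hw _ hTz)
  have hge := hδ_le _ _ (h.mapsTo _ hw) _ (h.mapsTo _ hTz)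
  linarith [Fin.le_of_forall_apply_add_one_le hδ_succ (j + 1 + 1) j]

theorem inter_add_one_nonempty (h : CyclicContraction p A T) (hp : IsPartialMetric p)
    (hne : ∀ i, (A i).Nonempty) {i₀ : Fin k} (hcpt : PZeroCompact p (A i₀)) (i : Fin k) :
    (A i ∩ A (i + 1)).Nonempty :=
  have ⟨_, hj⟩ := h.exists_inter_add_one_nonempty hp hne hcpt
  Fin.cyclic_induction (P := fun i => (A i ∩ A (i + 1)).Nonempty)
    (fun i ⟨x, hx⟩ => ⟨T x, h.inter_add_one.mapsTo i hx⟩) hj i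

open Fin.NatCast in
theorem iInter_nonempty (h : CyclicContraction p A T) (hp : IsPartialMetric p)
    (hne : ∀ i, (A i).Nonempty) (hcl : ∀ i, SeqClosed p (A i)) {i₀ : Fin k}
    (hcpt : PZeroCompact p (A i₀)) : (⋂ i, A i).Nonempty := by
  suffices key : ∀ m : ℕ, ∀ B : Fin k → Set X, CyclicContraction p B T →
      (∀ i, (B i).Nonempty) → (∀ i, SeqClosed p (B i)) → PZeroCompact p (B i₀) →
      ∃ x, ∀ t ≤ m, x ∈ B (i₀ + t) by
    obtain ⟨x, hx⟩ := key k A h hne hcl hcpt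
    exact ⟨x, mem_iInter.2 fun i => by simpa using hx (i - i₀).val (i - i₀).is_lt.le⟩
  intro m
  induction m with
  | zero =>
    intro B _ hne _ _
    obtain ⟨x, hx⟩ := hne i₀
    exact ⟨x, fun t ht => by simpa [Nat.le_zero.1 ht] using hx⟩
  | succ m ih =>
    intro B h hne hcl hcpt
    have hcl' : ∀ i, SeqClosed p (B i ∩ B (i + 1)) := fun i => (hcl i).inter (hcl (i + 1))
    obtain ⟨x, hx⟩ := ih _ h.inter_add_one (h.inter_add_one_nonempty hp hne hcpt) hcl'
      (hcpt.mono hp inter_subset_left (hcl' i₀))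
    refine ⟨x, fun t ht => ?_⟩
    rcases t with _ | t
    · simpa using (hx 0 m.zero_le).1
    · simpa [add_assoc] using (hx t (by omega)).2

theorem mapsTo_iInter (h : CyclicContraction p A T) : MapsTo T (⋂ i, A i) (⋂ i, A i) :=
  fun _ hx => mem_iInter.2 fun i => by simpa using h.mapsTo (i - 1) (mem_iInter.1 hx (i - 1))

theorem eq_of_isFixedPt (h : CyclicContraction p A T) {i : Fin k} {w z : X} (hw : w ∈ A i)
    (hz : z ∈ A (i + 1)) (hfw : IsFixedPt T w) (hfz : IsFixedPt T z) : w = z := by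
  by_contra hwz
  have := h.lt i w hw z hz hwz
  rw [hfw.eq, hfz.eq] at this
  exact lt_irrefl _ this

end CyclicContraction

end

/-- Edelstein-type theorem for cyclical mappings when one of the
sets of the cyclic decomposition is `0`-compact. -/
theorem cyclic_edelstein {X : Type*} (p : X → X → ℝ)
    (hp : IsPartialMetric p)
    (k : ℕ) [NeZero k] (A : Fin k → Set X)
    (hne : ∀ i, (A i).Nonempty) (hcl : ∀ i, SeqClosed p (A i))
    (hcompact : ∃ i, PZeroCompact p (A i))
    (T : X → X) (hT : ∀ i : Fin k, ∀ x ∈ A i, T x ∈ A (i + 1))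
    (hcontr : ∀ i : Fin k, ∀ x ∈ A i, ∀ y ∈ A (i + 1), x ≠ y →
      p (T x) (T y) < p x y) :
    ∃ z, T z = z ∧ (∀ i, z ∈ A i) ∧ ∀ w ∈ ⋃ i, A i, T w = w → w = z := by
  obtain ⟨i₀, hcpt⟩ := hcompact
  have h : CyclicContraction p A T := ⟨hT, hcontr⟩
  have hcpt' : PZeroCompact p (⋂ i, A i) := hcpt.mono hp (iInter_subset A i₀) (.iInter hcl)
  obtain ⟨z, hz, hfz⟩ := hcpt'.exists_fixedPt hp (h.iInter_nonempty hp hne hcl hcpt)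
    h.mapsTo_iInter fun x hx y hy => h.lt i₀ x (mem_iInter.1 hx _) y (mem_iInter.1 hy _)
  refine ⟨z, hfz, mem_iInter.1 hz, fun w hw hfw => ?_⟩
  obtain ⟨i, hwi⟩ := mem_iUnion.1 hw
  exact h.eq_of_isFixedPt hwi (mem_iInter.1 hz _) hfw hfz
end

section
/- Let (X,p) be a 0-complete partial metric space and let A and B be nonempty sequentially closed subsets of X with X = A ∪ B. Let f : A → B and g : B → A be functions such that f(x) = g(x) for all x ∈ A ∩ B, and such that p(f(x), g(y)) ≤ α·p(x,y) for all x ∈ A and y ∈ B, where 0 < α < 1. Then there exists a unique x₀ ∈ A ∩ B such that f(x₀) = g(x₀) = x₀. -/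
open Filter Topology

/-!
Glue `f` and `g` into the single map `T = A.piecewise f g`, which maps `A` into `B` and `B` into `A`
and contracts every pair in `A × B`. Its orbit from a point of `A` visits `A` and `B` alternately,
so consecutive distances shrink geometrically and the orbit is `0`-Cauchy. The limit is a limit
of points of `A` and of points of `B`, hence lies in `A ∩ B`, where the contraction makes it fixed.
-/

namespace IsPartialMetric

variable {X : Type*} {p : X → X → ℝ}

theorem le_add_s4 (hp : IsPartialMetric p) (x y z : X) : p x z ≤ p x y + p y z := by
  linarith [hp.triangle x y z, hp.nonneg y y]

theorem eq_of_le_mul (hp : IsPartialMetric p) {α : ℝ} (hα : α < 1) {x y : X}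
    (h : p x y ≤ α * p x y) : x = y :=
  hp.eq_of_eq_zero <| by nlinarith [hp.nonneg x y]

theorem eq_of_tendsto_zero (hp : IsPartialMetric p) {x : ℕ → X} {a b : X}
    (ha : Tendsto (fun n => p a (x n)) atTop (𝓝 0))
    (hb : Tendsto (fun n => p b (x n)) atTop (𝓝 0)) : a = b := by
  refine hp.eq_of_eq_zero (le_antisymm ?_ (hp.nonneg a b))
  refine ge_of_tendsto' (by simpa using ha.add hb) fun n => ?_
  linarith [hp.le_add_s4 a (x n) b, hp.symm (x n) b]

theorem le_geometric_of_succ_le (hp : IsPartialMetric p) {x : ℕ → X} {α : ℝ} (hα : 0 ≤ α)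
    (hα1 : α < 1) (h : ∀ n, p (x (n + 1)) (x (n + 2)) ≤ α * p (x n) (x (n + 1))) (k n : ℕ) :
    p (x n) (x (n + k)) ≤ α ^ n * p (x 0) (x 1) / (1 - α) := by
  set C := p (x 0) (x 1)
  have hgeom (n : ℕ) : p (x n) (x (n + 1)) ≤ α ^ n * C :=
    le_geom (u := fun n => p (x n) (x (n + 1))) hα n fun k _ => h k
  induction k generalizing n with
  | zero =>
    calc p (x n) (x n) ≤ p (x n) (x (n + 1)) := hp.self_le _ _
      _ ≤ α ^ n * C := hgeom n
      _ ≤ α ^ n * C / (1 - α) :=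
          le_div_self (mul_nonneg (pow_nonneg hα n) (hp.nonneg _ _)) (by linarith) (by linarith)
  | succ k ih =>
    calc p (x n) (x (n + (k + 1))) ≤ p (x n) (x (n + 1)) + p (x (n + 1)) (x (n + 1 + k)) := by
          rw [show n + 1 + k = n + (k + 1) by ring]; exact hp.le_add_s4 _ _ _
      _ ≤ α ^ n * C + α ^ (n + 1) * C / (1 - α) :=
          add_le_add (hgeom n) (ih (n + 1))
      _ = α ^ n * C / (1 - α) := by field_simp [show 1 - α ≠ 0 by linarith]; ring

theorem pZeroCauchy_of_succ_le (hp : IsPartialMetric p) {x : ℕ → X} {α : ℝ} (hα : 0 ≤ α)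
    (hα1 : α < 1) (h : ∀ n, p (x (n + 1)) (x (n + 2)) ≤ α * p (x n) (x (n + 1))) :
    PZeroCauchy p x := by
  set b : ℕ → ℝ := fun n => α ^ n * p (x 0) (x 1) / (1 - α)
  have hb : Tendsto b atTop (𝓝 0) := by
    simpa [b] using ((tendsto_pow_atTop_nhds_zero_of_lt_one hα hα1).mul_const
      (p (x 0) (x 1))).div_const (1 - α)
  have hmin : Tendsto (fun mn : ℕ × ℕ => min mn.1 mn.2) atTop atTop :=
    tendsto_atTop_atTop.2 fun n => ⟨(n, n), fun _ h => le_min h.1 h.2⟩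
  have hbound (m n : ℕ) : p (x m) (x n) ≤ b (min m n) := by
    rcases le_total m n with hmn | hnm
    · obtain ⟨k, rfl⟩ := Nat.exists_eq_add_of_le hmn
      simpa [b] using hp.le_geometric_of_succ_le hα hα1 h k m
    · obtain ⟨k, rfl⟩ := Nat.exists_eq_add_of_le hnm
      simpa [b, hp.symm (x (n + k))] using hp.le_geometric_of_succ_le hα hα1 h k n
  exact squeeze_zero (fun _ => hp.nonneg _ _) (fun mn => hbound mn.1 mn.2) (hb.comp hmin)

end IsPartialMetric

theorem SeqClosed.mem_of_frequently {X : Type*} {p : X → X → ℝ} {A : Set X}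
    (hA : SeqClosed p A) {x : ℕ → X} {a : X} (hx : PConverges p x a)
    (hfreq : ∃ᶠ n in atTop, x n ∈ A) : a ∈ A := by
  obtain ⟨φ, hφ, hφA⟩ := extraction_of_frequently_atTop hfreq
  exact hA (x ∘ φ) a hφA (hx.comp hφ.tendsto_atTop)

section CyclicContraction

variable {X : Type*} {T : X → X} {A B : Set X}

theorem frequently_iterate_mem_of_mapsTo (hBA : Set.MapsTo T B A) {x₀ : X}
    (hx₀ : ∀ n, T^[n] x₀ ∈ A ∪ B) : ∃ᶠ n in atTop, T^[n] x₀ ∈ A := by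
  refine frequently_atTop.2 fun n => ?_
  rcases hx₀ n with hA | hB
  · exact ⟨n, le_rfl, hA⟩
  · exact ⟨n + 1, n.le_succ, Function.iterate_succ_apply' T n x₀ ▸ hBA hB⟩

theorem IsPartialMetric.map_le_mul_of_mem_or_mem {p : X → X → ℝ} (hp : IsPartialMetric p) {α : ℝ}
    (hT : ∀ x ∈ A, ∀ y ∈ B, p (T x) (T y) ≤ α * p x y) {x y : X}
    (h : x ∈ A ∧ y ∈ B ∨ x ∈ B ∧ y ∈ A) : p (T x) (T y) ≤ α * p x y := by
  rcases h with ⟨hx, hy⟩ | ⟨hx, hy⟩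
  · exact hT x hx y hy
  · rw [hp.symm, hp.symm x]
    exact hT y hy x hx

theorem existsUnique_fixedPoint_of_cyclic_contraction {p : X → X → ℝ}
    (hp : IsPartialMetric p) (hcomp : PZeroComplete p)
    (hAcl : SeqClosed p A) (hBcl : SeqClosed p B) {x₀ : X} (hx₀ : x₀ ∈ A)
    (hAB : Set.MapsTo T A B) (hBA : Set.MapsTo T B A) {α : ℝ} (hα : 0 ≤ α) (hα1 : α < 1)
    (hT : ∀ x ∈ A, ∀ y ∈ B, p (T x) (T y) ≤ α * p x y) :
    ∃! a, a ∈ A ∩ B ∧ T a = a := by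
  set x : ℕ → X := fun n => T^[n] x₀
  have hx (n : ℕ) : x (n + 1) = T (x n) := Function.iterate_succ_apply' T n x₀
  have hxmem (n : ℕ) : x n ∈ A ∪ B :=
    ((hAB.union_union hBA).mono_right (Set.union_comm B A).le).iterate n (Or.inl hx₀)
  have hstep (n : ℕ) : p (x (n + 1)) (x (n + 2)) ≤ α * p (x n) (x (n + 1)) := by
    rw [hx (n + 1), hx n]
    refine hp.map_le_mul_of_mem_or_mem hT ?_
    rcases hxmem n with hA | hB
    exacts [Or.inl ⟨hA, hAB hA⟩, Or.inr ⟨hB, hBA hB⟩]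
  obtain ⟨a, hconv, haa⟩ := hcomp x (hp.pZeroCauchy_of_succ_le hα hα1 hstep)
  have hconv0 : Tendsto (fun n => p a (x n)) atTop (𝓝 0) := haa ▸ hconv
  have ha : a ∈ A ∩ B :=
    ⟨hAcl.mem_of_frequently hconv (frequently_iterate_mem_of_mapsTo hBA hxmem),
      hBcl.mem_of_frequently hconv
        (frequently_iterate_mem_of_mapsTo hAB fun n => Set.union_comm A B ▸ hxmem n)⟩
  have hTa : T a = a := by
    refine hp.eq_of_tendsto_zero (x := fun n => x (n + 1)) ?_
      (hconv0.comp (tendsto_add_atTop_nat 1))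
    refine squeeze_zero (fun _ => hp.nonneg _ _) (fun n => ?_)
      (by simpa using hconv0.const_mul α)
    rw [hx n]
    refine hp.map_le_mul_of_mem_or_mem hT ?_
    rcases hxmem n with hA | hB
    exacts [Or.inr ⟨ha.2, hA⟩, Or.inl ⟨ha.1, hB⟩]
  refine ⟨a, ⟨ha, hTa⟩, fun y ⟨hy, hTy⟩ => hp.eq_of_le_mul hα1 ?_⟩
  simpa [hTa, hTy, hp.symm y a] using hT a ha.1 y hy.2

end CyclicContraction

theorem common_fixed_point_cyclic_general {X : Type*} (p : X → X → ℝ)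
    (hp : IsPartialMetric p) (hcomp : PZeroComplete p)
    (A B : Set X) (hA : A.Nonempty)
    (hAcl : SeqClosed p A) (hBcl : SeqClosed p B)
    (f g : X → X) (hf : ∀ x ∈ A, f x ∈ B) (hg : ∀ y ∈ B, g y ∈ A)
    (hfg : ∀ x ∈ A ∩ B, f x = g x)
    (α : ℝ) (hα : 0 < α) (hα1 : α < 1)
    (hcontr : ∀ x ∈ A, ∀ y ∈ B, p (f x) (g y) ≤ α * p x y) :
    ∃! x₀, x₀ ∈ A ∩ B ∧ f x₀ = x₀ ∧ g x₀ = x₀ := by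
  classical
  set T := A.piecewise f g
  have hTA {x : X} (hx : x ∈ A) : T x = f x := A.piecewise_eq_of_mem f g hx
  have hTB {y : X} (hy : y ∈ B) : T y = g y := by
    by_cases hyA : y ∈ A
    · rw [hTA hyA, hfg y ⟨hyA, hy⟩]
    · exact A.piecewise_eq_of_notMem f g hyA
  obtain ⟨x₀, hx₀⟩ := hA
  obtain ⟨a, ⟨ha, hTa⟩, huniq⟩ := existsUnique_fixedPoint_of_cyclic_contraction hp hcomp hAcl
    hBcl hx₀ (fun x hx => hTA hx ▸ hf x hx) (fun y hy => hTB hy ▸ hg y hy) hα.le hα1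
    (fun x hx y hy => hTA hx ▸ hTB hy ▸ hcontr x hx y hy)
  refine ⟨a, ⟨ha, hTA ha.1 ▸ hTa, hTB ha.2 ▸ hTa⟩, fun y ⟨hy, hfy, _⟩ => huniq y ⟨hy, ?_⟩⟩
  rw [hTA hy.1, hfy]

/-- common fixed point of two maps `f : A → B`, `g : B → A`
agreeing on `A ∩ B` and satisfying a joint contraction condition. -/
theorem common_fixed_point_cyclic {X : Type*} (p : X → X → ℝ)
    (hp : IsPartialMetric p) (hcomp : PZeroComplete p)
    (A B : Set X) (hA : A.Nonempty) (hB : B.Nonempty)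
    (hAcl : SeqClosed p A) (hBcl : SeqClosed p B) (hX : A ∪ B = Set.univ)
    (f g : X → X) (hf : ∀ x ∈ A, f x ∈ B) (hg : ∀ y ∈ B, g y ∈ A)
    (hfg : ∀ x ∈ A ∩ B, f x = g x)
    (α : ℝ) (hα : 0 < α) (hα1 : α < 1)
    (hcontr : ∀ x ∈ A, ∀ y ∈ B, p (f x) (g y) ≤ α * p x y) :
    ∃! x₀, x₀ ∈ A ∩ B ∧ f x₀ = x₀ ∧ g x₀ = x₀ :=
  common_fixed_point_cyclic_general p hp hcomp A B hA hAcl hBcl f g hf hg hfg α hα hα1 hcontr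
end

section
/- Let (X,p) be a 0-complete partial metric space and let f : X → X be such that p(f(x), f(y)) ≤ α·p(x,y) for all x, y ∈ X, where α ∈ [0,1). Then there exists a unique u ∈ X such that u = f(u), and moreover p(u,u) = 0. -/
open Filter Topology

/-- Matthews' Banach contraction principle on a `0`-complete
partial metric space. -/
theorem matthews_banach {X : Type*} [Nonempty X] (p : X → X → ℝ)
    (hp : IsPartialMetric p) (hcomp : PZeroComplete p)
    (f : X → X) (α : ℝ) (hα : α ∈ Set.Ico (0:ℝ) 1)
    (hcontr : ∀ x y, p (f x) (f y) ≤ α * p x y) :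
    ∃ u, u = f u ∧ p u u = 0 ∧ ∀ v, v = f v → v = u := by
  obtain ⟨hα0, hα1⟩ := hα
  obtain ⟨x0⟩ := ‹Nonempty X›
  set x : ℕ → X := fun n => f^[n] x0 with hx
  have hstep : ∀ n, x (n+1) = f (x n) := fun n => Function.iterate_succ_apply' f n x0
  set C : ℝ := p x0 (f x0) with hCdef
  have hC : 0 ≤ C := hp.nonneg _ _
  have hone : 0 < 1 - α := by linarith
  set K : ℝ := C + C / (1 - α) with hKdef
  have hDnn : 0 ≤ C / (1 - α) := div_nonneg hC (le_of_lt hone)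
  have hK : 0 ≤ K := by positivity
  have hD : C / (1 - α) * (1 - α) = C := div_mul_cancel₀ _ (ne_of_gt hone)
  have hadj : ∀ n, p (x n) (x (n+1)) ≤ α ^ n * C := by
    intro n; induction n with
    | zero => simp [hx, hCdef]
    | succ n ih =>
      have h := hcontr (x n) (x (n+1))
      rw [← hstep n, ← hstep (n+1)] at h
      calc p (x (n+1)) (x (n+1+1)) ≤ α * p (x n) (x (n+1)) := h
        _ ≤ α * (α ^ n * C) := mul_le_mul_of_nonneg_left ih hα0
        _ = α ^ (n+1) * C := by ring
  have hCK : C ≤ K := le_add_of_nonneg_right hDnn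
  have hbound : ∀ k n, p (x n) (x (n+k)) ≤ α ^ n * K := by
    intro k; induction k with
    | zero =>
      intro n
      have h1 := le_trans (hp.self_le (x n) (x (n+1))) (hadj n)
      calc p (x n) (x (n+0)) = p (x n) (x n) := by norm_num
        _ ≤ α ^ n * C := h1
        _ ≤ α ^ n * K := mul_le_mul_of_nonneg_left hCK (pow_nonneg hα0 n)
    | succ k ih =>
      intro n
      have t := hp.triangle (x n) (x (n+1)) (x (n+1+k))
      have h1 := hadj n
      have h2 := ih (n+1)
      have h3 := hp.nonneg (x (n+1)) (x (n+1))
      have heq : n + (k+1) = n + 1 + k := by omega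
      rw [heq]
      have key : α ^ n * C + α ^ (n+1) * K ≤ α ^ n * K := by
        have hpow : (0:ℝ) ≤ α ^ n := pow_nonneg hα0 n
        have : C + α * K ≤ K := by
          rw [hKdef]; nlinarith [hD]
        have h4 := mul_le_mul_of_nonneg_left this hpow
        rw [pow_succ]; nlinarith
      calc p (x n) (x (n+1+k)) ≤ p (x n) (x (n+1)) + p (x (n+1)) (x (n+1+k)) := by linarith
        _ ≤ α ^ n * C + α ^ (n+1) * K := by exact add_le_add h1 h2
        _ ≤ α ^ n * K := key
  have hgen : ∀ m n, p (x m) (x n) ≤ α ^ min m n * K := by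
    intro m n
    rcases le_total m n with h | h
    · have hb := hbound (n - m) m
      rw [Nat.add_sub_cancel' h] at hb
      rwa [min_eq_left h]
    · have hb := hbound (m - n) n
      rw [Nat.add_sub_cancel' h] at hb
      rw [min_eq_right h, hp.symm]
      exact hb
  have hmin : Tendsto (fun mn : ℕ × ℕ => min mn.1 mn.2) atTop atTop := by
    rw [Filter.tendsto_atTop]
    intro b
    filter_upwards [Filter.eventually_ge_atTop ((b, b) : ℕ × ℕ)] with mn hmn
    exact le_min hmn.1 hmn.2
  have hcauchy : PZeroCauchy p x := by
    have hlim : Tendsto (fun mn : ℕ × ℕ => α ^ min mn.1 mn.2 * K) atTop (𝓝 (0 * K)) :=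
      (((tendsto_pow_atTop_nhds_zero_of_lt_one hα0 hα1).comp hmin).mul_const K)
    rw [zero_mul] at hlim
    exact tendsto_of_tendsto_of_tendsto_of_le_of_le tendsto_const_nhds hlim
      (fun mn => hp.nonneg _ _) (fun mn => hgen _ _)
  obtain ⟨a, ha, haa⟩ := hcomp x hcauchy
  have ha0 : Tendsto (fun n => p a (x n)) atTop (𝓝 0) := haa ▸ ha
  have hfa : p a (f a) = 0 := by
    have key : ∀ n, p a (f a) ≤ p a (x (n+1)) + α * p a (x n) := by
      intro n
      have t := hp.triangle a (x (n+1)) (f a)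
      have c := hcontr (x n) a
      rw [← hstep n] at c
      rw [hp.symm (x n) a] at c
      have nn := hp.nonneg (x (n+1)) (x (n+1))
      linarith
    have lim : Tendsto (fun n => p a (x (n+1)) + α * p a (x n)) atTop (𝓝 (0 + α * 0)) :=
      ((ha0.comp (tendsto_add_atTop_nat 1)).add (ha0.const_mul α))
    rw [show (0:ℝ) + α * 0 = 0 by ring] at lim
    exact le_antisymm (ge_of_tendsto' lim key) (hp.nonneg _ _)
  have hff : p (f a) (f a) = 0 := by
    have := hcontr a a
    rw [haa] at this
    exact le_antisymm (by linarith) (hp.nonneg _ _)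
  have hu : a = f a := hp.eq_of a (f a) (by rw [haa, hfa]) (by rw [hfa, hff])
  refine ⟨a, hu, haa, ?_⟩
  intro v hv
  have h1 : p v a ≤ α * p v a := by
    calc p v a = p (f v) (f a) := by rw [← hv, ← hu]
      _ ≤ α * p v a := hcontr v a
  have hva : p v a = 0 := by nlinarith [hp.nonneg v a]
  have hvv : p v v = 0 :=
    le_antisymm (hva ▸ hp.self_le v a) (hp.nonneg v v)
  exact hp.eq_of v a (by rw [hvv, hva]) (by rw [hva, haa])
end

section
/- Let X = ℚ ∩ [0,∞) (the nonnegative rationals) with p(x,y) = max{x,y}. Then p is a partial metric on X, the partial metric space (X,p) is 0-complete, but (X,p) is not complete. -/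
open Filter Topology

/-!
For `p x y = max (f x) (f y)` with `f` injective and nonnegative, the self-distance `p a a` is
`f a`, and the double limit of `p (x m) (x n)` is the limit of `f (x n)` in `ℝ`. A `0`-Cauchy
sequence therefore converges to any point with `f a = 0`, while completeness forces the range of
`f` to be closed in `ℝ`; for the nonnegative rationals, rationals tending to `√2` witness that
it is not.
-/

section MaxPartialMetric

variable {X : Type*} {f : X → ℝ}

theorem isPartialMetric_max (hf : Function.Injective f) (hf₀ : ∀ x, 0 ≤ f x) :
    IsPartialMetric (fun x y => max (f x) (f y)) where
  nonneg x y := (hf₀ x).trans (le_max_left _ _)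
  symm x y := max_comm _ _
  eq_of x y hx hy := hf <| by rw [max_self] at hx; rw [max_self] at hy; exact hx.trans hy
  self_le x y := by rw [max_self]; exact le_max_left _ _
  triangle x y z := by
    rw [max_self]
    have := le_max_left (f x) (f y); have := le_max_right (f x) (f y)
    have := le_max_left (f y) (f z); have := le_max_right (f y) (f z)
    rcases le_total (f x) (f z) with h | h
    · rw [max_eq_right h]; linarith
    · rw [max_eq_left h]; linarith

theorem tendsto_max_prod_atTop {u : ℕ → ℝ} {L : ℝ} (hu : Tendsto u atTop (𝓝 L)) :
    Tendsto (fun mn : ℕ × ℕ => max (u mn.1) (u mn.2)) atTop (𝓝 L) := by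
  rw [← prod_atTop_atTop_eq, ← max_self L]
  exact (hu.comp tendsto_fst).max (hu.comp tendsto_snd)

theorem tendsto_of_tendsto_max_prod_atTop {u : ℕ → ℝ} {L : ℝ}
    (hu : Tendsto (fun mn : ℕ × ℕ => max (u mn.1) (u mn.2)) atTop (𝓝 L)) :
    Tendsto u atTop (𝓝 L) := by
  simpa only [Function.comp_def, max_self] using hu.comp tendsto_atTop_diagonal

theorem pZeroComplete_max (hf₀ : ∀ x, 0 ≤ f x) {a : X} (ha : f a = 0) :
    PZeroComplete (fun x y => max (f x) (f y)) := by
  intro x hx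
  refine ⟨a, ?_, show max (f a) (f a) = 0 by rw [ha, max_self]⟩
  have hx₀ : Tendsto (fun n => f (x n)) atTop (𝓝 0) := tendsto_of_tendsto_max_prod_atTop hx
  simpa only [PConverges, ha, max_self, max_eq_right (hf₀ _)] using hx₀

theorem not_pComplete_max {L : ℝ} (hL : L ∈ closure (Set.range f) \ Set.range f) :
    ¬ PComplete (fun x y => max (f x) (f y)) := by
  intro hcomplete
  obtain ⟨v, hv, hvL⟩ := mem_closure_iff_seq_limit.mp hL.1
  choose x hx using hv
  have hfx : Tendsto (fun n => f (x n)) atTop (𝓝 L) := by simpa only [hx] using hvL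
  obtain ⟨a, -, ha⟩ := hcomplete x ⟨L, tendsto_max_prod_atTop hfx⟩
  have hfa : f a = L := by
    rw [← max_self (f a)]
    exact tendsto_nhds_unique ha (tendsto_max_prod_atTop hfx)
  exact hL.2 ⟨a, hfa⟩

end MaxPartialMetric

theorem sqrt_two_mem_closure_range_nonneg_rat :
    √2 ∈ closure (Set.range fun q : {q : ℚ // 0 ≤ q} => (q.1 : ℝ)) := by
  rw [Metric.mem_closure_iff]
  intro ε hε
  have hlt : max (√2 - ε) 0 < √2 := max_lt (by linarith) (by positivity)
  obtain ⟨q, hq, hq₂⟩ := exists_rat_btwn hlt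
  have hq₀ : (0 : ℝ) ≤ q := (le_max_right _ _).trans hq.le
  refine ⟨q, ⟨⟨q, by exact_mod_cast hq₀⟩, rfl⟩, ?_⟩
  rw [Real.dist_eq, abs_of_pos (by linarith)]
  linarith [le_max_left (√2 - ε) 0]

/-- the nonnegative rationals with `p(x,y) = max{x,y}` form a
`0`-complete partial metric space which is not complete. -/
theorem nonneg_rat_max_zeroComplete_not_complete :
    IsPartialMetric (fun x y : {q : ℚ // 0 ≤ q} => max (x.1 : ℝ) (y.1 : ℝ)) ∧
    PZeroComplete (fun x y : {q : ℚ // 0 ≤ q} => max (x.1 : ℝ) (y.1 : ℝ)) ∧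
    ¬ PComplete (fun x y : {q : ℚ // 0 ≤ q} => max (x.1 : ℝ) (y.1 : ℝ)) := by
  have hinj : Function.Injective fun q : {q : ℚ // 0 ≤ q} => (q.1 : ℝ) :=
    Rat.cast_injective.comp Subtype.val_injective
  have hnonneg (q : {q : ℚ // 0 ≤ q}) : (0 : ℝ) ≤ q.1 := by exact_mod_cast q.2
  refine ⟨isPartialMetric_max hinj hnonneg, pZeroComplete_max hnonneg (a := ⟨0, le_rfl⟩)
    Rat.cast_zero, not_pComplete_max ⟨sqrt_two_mem_closure_range_nonneg_rat, ?_⟩⟩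
  rintro ⟨q, hq⟩
  exact irrational_sqrt_two ⟨q.1, hq⟩
end

section
/- Let (X,p) be a partial metric space, α ∈ (0,1), and T : X → X a map satisfying p(Tx, T(Tx)) ≤ α·p(x,Tx) for all x ∈ X. Then for every x ∈ X the sequence of iterates (Tⁿx)_{n≥0} is 0-Cauchy, i.e. lim_{m,n→∞} p(Tⁿx, Tᵐx) = 0. -/
open Filter Topology

/-- if `p(Tx,T²x) ≤ α p(x,Tx)` for all `x`, then every orbit
`(Tⁿ x)` is `0`-Cauchy. -/
theorem orbit_zeroCauchy {X : Type*} (p : X → X → ℝ)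
    (hp : IsPartialMetric p) (α : ℝ) (hα : α ∈ Set.Ioo (0:ℝ) 1)
    (T : X → X) (hcontr : ∀ x, p (T x) (T (T x)) ≤ α * p x (T x)) :
    ∀ x : X, PZeroCauchy p (fun n => T^[n] x) := by
  intro x
  set d := p x (T x) with hd
  have hd0 : 0 ≤ d := hp.nonneg _ _
  have h1α : 0 < 1 - α := by linarith [hα.2]
  set D := d / (1 - α) with hD
  have hD0 : 0 ≤ D := div_nonneg hd0 (le_of_lt h1α)
  have hdD : d ≤ D := by
    rw [hD, le_div_iff₀ h1α]; nlinarith [hα.1]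
  set y : ℕ → X := fun n => T^[n] x with hy
  have hsucc : ∀ n, y (n+1) = T (y n) := fun n => Function.iterate_succ_apply' T n x
  -- step bound
  have step : ∀ n, p (y n) (y (n+1)) ≤ α ^ n * d := by
    intro n
    induction n with
    | zero => simp [hy, hd]
    | succ n ih =>
      calc p (y (n+1)) (y (n+2)) = p (T (y n)) (T (T (y n))) := by
            rw [hsucc (n+1), hsucc n]
        _ ≤ α * p (y n) (T (y n)) := hcontr _
        _ = α * p (y n) (y (n+1)) := by rw [hsucc n]
        _ ≤ α * (α ^ n * d) := mul_le_mul_of_nonneg_left ih (le_of_lt hα.1)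
        _ = α ^ (n+1) * d := by ring
  have tri : ∀ a b c : X, p a c ≤ p a b + p b c := fun a b c => by
    have := hp.triangle a b c
    have := hp.nonneg b b
    linarith
  have hαpow : ∀ k : ℕ, 0 ≤ α ^ k ∧ α ^ k ≤ 1 := fun k =>
    ⟨pow_nonneg (le_of_lt hα.1) k, pow_le_one₀ (le_of_lt hα.1) (le_of_lt hα.2)⟩
  -- chain bound
  have chain1 : ∀ m k, p (y m) (y (m+k+1)) ≤ (1 - α ^ (k+1)) * (α ^ m * D) := by
    intro m k
    induction k with
    | zero =>
      have h1 := step m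
      have h2 : α ^ m * d = (1 - α ^ 1) * (α ^ m * D) := by
        rw [hD, pow_one]; field_simp
      simp only [Nat.add_zero, Nat.zero_add]
      linarith
    | succ k ih =>
      have h1 := tri (y m) (y (m+k+1)) (y (m+k+2))
      have h2 := step (m+k+1)
      have key : α ^ (m+k+1) * d = α ^ (k+1) * (1 - α) * (α ^ m * D) := by
        rw [hD]; field_simp; ring
      have : p (y m) (y (m+k+2)) ≤
          (1 - α ^ (k+1)) * (α ^ m * D) + α ^ (k+1) * (1 - α) * (α ^ m * D) := by
        calc p (y m) (y (m+k+2)) ≤ p (y m) (y (m+k+1)) + p (y (m+k+1)) (y (m+k+2)) := h1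
          _ ≤ (1 - α ^ (k+1)) * (α ^ m * D) + α ^ (m+k+1) * d := by linarith
          _ = _ := by rw [key]
      calc p (y m) (y (m+(k+1)+1)) = p (y m) (y (m+k+2)) := by ring_nf
        _ ≤ (1 - α ^ (k+1)) * (α ^ m * D) + α ^ (k+1) * (1 - α) * (α ^ m * D) := this
        _ = (1 - α ^ (k+2)) * (α ^ m * D) := by ring
  have chain : ∀ m k, p (y m) (y (m+k)) ≤ α ^ m * D := by
    intro m k
    match k with
    | 0 =>
      have h1 : p (y m) (y m) ≤ p (y m) (y (m+1)) := hp.self_le _ _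
      have h2 := step m
      have h3 : α ^ m * d ≤ α ^ m * D := mul_le_mul_of_nonneg_left hdD (hαpow m).1
      simpa using le_trans (le_trans h1 h2) h3
    | k+1 =>
      have h := chain1 m k
      have := (hαpow (k+1)).1
      simp only [← Nat.add_assoc]
      nlinarith [mul_nonneg (hαpow m).1 hD0]
  have bound : ∀ m n : ℕ, p (y m) (y n) ≤ α ^ (min m n) * D := by
    intro m n
    rcases le_total m n with h | h
    · rw [min_eq_left h]
      have := chain m (n - m)
      rwa [Nat.add_sub_cancel' h] at this
    · rw [min_eq_right h, hp.symm]
      have := chain n (m - n)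
      rwa [Nat.add_sub_cancel' h] at this
  -- conclude
  have hmin : Tendsto (fun mn : ℕ × ℕ => min mn.1 mn.2) atTop atTop := by
    apply Filter.tendsto_atTop_atTop.2
    intro b
    exact ⟨(b, b), fun mn h => le_min h.1 h.2⟩
  have hpow : Tendsto (fun mn : ℕ × ℕ => α ^ (min mn.1 mn.2) * D) atTop (𝓝 0) := by
    have h0 : Tendsto (fun k : ℕ => α ^ k) atTop (𝓝 0) :=
      tendsto_pow_atTop_nhds_zero_of_lt_one (le_of_lt hα.1) hα.2
    have := (h0.comp hmin).mul_const D
    simpa using this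
  refine squeeze_zero (fun mn => hp.nonneg _ _) (fun mn => bound mn.1 mn.2) hpow
end

section
/- Let A = [0,1] ⊆ ℝ, B = [3,4] ∪ {3/2}, X = A ∪ B, and p(x,y) = max{x,y}. Define T : X → X by T(x) = 3/2 for x ∈ [0,1], T(3/2) = 1/2, and T(x) = (x−2)/2 for x ∈ [3,4]. Then: (i) p is a partial metric on X; (ii) T(A) ⊆ B and T(B) ⊆ A; (iii) for every α ∈ (0,1) and all x ∈ A, y ∈ B, p(Tx,Ty) ≤ max{α·p(x,y), p(x,x), p(y,y)}; (iv) A ∩ B = ∅ and T has no fixed point. (Hence the generalized partial contraction principle of Ilić, Pavlović and Rakočević cannot be extended to cyclical mappings.) -/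
open Filter Topology

namespace Stmt17

/-- The ambient space `X = [0,1] ∪ ([3,4] ∪ {3/2}) ⊆ ℝ`. -/
abbrev X : Type :=
  {x : ℝ // x ∈ Set.Icc (0:ℝ) 1 ∪ (Set.Icc (3:ℝ) 4 ∪ {(3:ℝ)/2})}

/-- `p(x,y) = max{x,y}`. -/
noncomputable def p (x y : X) : ℝ := max x.1 y.1

/-- `T(x) = 3/2` on `[0,1]`, `T(3/2) = 1/2`, `T(x) = (x−2)/2` on `[3,4]`. -/
noncomputable def T (x : X) : X :=
  if h1 : x.1 ≤ 1 then ⟨3/2, Or.inr (Or.inr rfl)⟩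
  else if hx : x.1 = 3/2 then ⟨1/2, Or.inl (by constructor <;> norm_num)⟩
  else ⟨(x.1 - 2)/2, by
    rcases x.2 with h | h | h
    · exact absurd h.2 (by push_neg at *; linarith [x.2])
    · exact Or.inl ⟨by linarith [h.1], by linarith [h.2]⟩
    · exact absurd h hx⟩

/-- `A = [0,1]`. -/
def A : Set X := {x : X | x.1 ∈ Set.Icc (0:ℝ) 1}

/-- `B = [3,4] ∪ {3/2}`. -/
def B : Set X := {x : X | x.1 ∈ Set.Icc (3:ℝ) 4 ∪ {(3:ℝ)/2}}

/-- the generalized partial contraction principle cannot be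
extended to cyclical mappings: `p` is a partial metric, `T` is cyclic on
`A`, `B` and satisfies the partial cyclical contraction condition for every
`α ∈ (0,1)`, yet `A ∩ B = ∅` and `T` has no fixed point. -/
theorem counterexample_partial_cyclic :
    IsPartialMetric p ∧
    ((∀ x ∈ A, T x ∈ B) ∧ (∀ y ∈ B, T y ∈ A)) ∧
    (∀ α ∈ Set.Ioo (0:ℝ) 1, ∀ x ∈ A, ∀ y ∈ B,
      p (T x) (T y) ≤ max (α * p x y) (max (p x x) (p y y))) ∧
    (A ∩ B = ∅ ∧ ∀ x : X, T x ≠ x) := by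
  have hnn : ∀ x : X, (0:ℝ) ≤ x.1 := by
    intro x
    rcases x.2 with h | h | h
    · exact h.1
    · linarith [h.1]
    · simp only [Set.mem_singleton_iff] at h; rw [h]; norm_num
  refine ⟨⟨?_, ?_, ?_, ?_, ?_⟩, ⟨?_, ?_⟩, ?_, ?_, ?_⟩
  · intro x y; exact le_trans (hnn x) (le_max_left _ _)
  · intro x y; exact max_comm _ _
  · intro x y h1 h2
    have hx : x.1 ≤ y.1 := by
      by_contra h; push_neg at h
      simp only [p, max_eq_left h.le, max_self] at h2
      exact absurd h2 h.ne'
    have h1' : x.1 = max x.1 y.1 := by simpa [p] using h1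
    rw [max_eq_right hx] at h1'
    exact Subtype.ext h1'
  · intro x y; simp [p]
  · intro x y z
    simp only [p, max_self]
    have h1 := le_max_left x.1 y.1
    have h2 := le_max_right x.1 y.1
    have h3 := le_max_left y.1 z.1
    have h4 := le_max_right y.1 z.1
    rcases max_cases x.1 z.1 with ⟨h, _⟩ | ⟨h, _⟩ <;> rw [h] <;> linarith
  · intro x hx
    have : T x = ⟨3/2, Or.inr (Or.inr rfl)⟩ := dif_pos hx.2
    rw [this]; exact Or.inr rfl
  · intro y hB
    rcases hB with hy1 | hy1
    · have h1 : ¬ (y.1 ≤ 1) := by push_neg; linarith [hy1.1]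
      have h2 : y.1 ≠ 3/2 := by intro h; rw [h] at hy1; norm_num at hy1
      have hTy : (T y).1 = (y.1 - 2)/2 := by simp [T, dif_neg h1, dif_neg h2]
      show (T y).1 ∈ Set.Icc (0:ℝ) 1
      rw [hTy]
      constructor <;> [linarith [hy1.1]; linarith [hy1.2]]
    · simp only [Set.mem_singleton_iff] at hy1
      have h1 : ¬ (y.1 ≤ 1) := by rw [hy1]; norm_num
      have hTy : (T y).1 = 1/2 := by simp [T, dif_neg h1, dif_pos hy1]
      show (T y).1 ∈ Set.Icc (0:ℝ) 1
      rw [hTy]; constructor <;> norm_num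
  · intro α hα x hx y hy
    have hTx : T x = ⟨3/2, Or.inr (Or.inr rfl)⟩ := dif_pos hx.2
    rcases hy with hy1 | hy1
    · have h1 : ¬ (y.1 ≤ 1) := by push_neg; linarith [hy1.1]
      have h2 : y.1 ≠ 3/2 := by intro h; rw [h] at hy1; norm_num at hy1
      have hTy : (T y).1 = (y.1 - 2)/2 := by simp [T, dif_neg h1, dif_neg h2]
      have hval : p (T x) (T y) = 3/2 := by
        simp only [p, hTx, hTy]
        exact max_eq_left (by linarith [hy1.2])
      rw [hval]
      refine le_trans ?_ (le_max_of_le_right (le_max_right _ _))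
      simp only [p, max_self]; linarith [hy1.1]
    · simp only [Set.mem_singleton_iff] at hy1
      have h1 : ¬ (y.1 ≤ 1) := by rw [hy1]; norm_num
      have hTy : (T y).1 = 1/2 := by simp [T, dif_neg h1, dif_pos hy1]
      have hval : p (T x) (T y) = 3/2 := by
        simp only [p, hTx, hTy]; norm_num
      rw [hval]
      refine le_trans ?_ (le_max_of_le_right (le_max_right _ _))
      simp only [p, max_self, hy1]; norm_num
  · ext x
    simp only [Set.mem_inter_iff, Set.mem_empty_iff_false, iff_false, A, B,
      Set.mem_setOf_eq]
    rintro ⟨hA, hB | hB⟩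
    · linarith [hA.2, hB.1]
    · simp only [Set.mem_singleton_iff] at hB
      rw [hB] at hA; norm_num at hA
  · intro x h
    by_cases h1 : x.1 ≤ 1
    · have hv : (T x).1 = 3/2 := by simp [T, dif_pos h1]
      rw [h] at hv; linarith
    · by_cases h2 : x.1 = 3/2
      · have hv : (T x).1 = 1/2 := by simp [T, dif_neg h1, dif_pos h2]
        rw [h, h2] at hv; norm_num at hv
      · have hv : (T x).1 = (x.1 - 2)/2 := by simp [T, dif_neg h1, dif_neg h2]
        rw [h] at hv
        have hx3 : 3 ≤ x.1 := by
          rcases x.2 with hh | hh | hh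
          · exact absurd hh.2 h1
          · exact hh.1
          · exact absurd hh h2
        linarith

end Stmt17
end

section
/- Let (X,p) be a complete partial metric space, α ∈ [0,1), and T : X → X a mapping such that for all x, y ∈ X, p(Tx,Ty) ≤ max{α·p(x,y), p(x,x), p(y,y)}. Let ρ_p = inf{p(x,y) : x, y ∈ X} and X_p = {x ∈ X : p(x,x) = ρ_p}. Then: (1) X_p is nonempty; (2) there is a unique u ∈ X_p such that Tu = u; (3) for each x ∈ X_p the sequence (Tⁿx)_{n≥1} converges to u with respect to the induced metric p^s, i.e. lim_{n→∞} p^s(Tⁿx, u) = 0. -/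
/-!
The contraction condition makes the self-distance `p (T^[n] x) (T^[n] x)` non-increasing along
every orbit and gives `p (T^[n] x) (T^[n] y) ≤ max (α ^ n * p x y) (max (p x x) (p y y))`.
Hence every orbit is Cauchy, and by completeness it converges to some `z` together with its
self-distances. Passing to the limit in the contraction condition gives `p z (T z) ≤ p z z`,
and orbit limits `z`, `z'` of `x`, `y` satisfy `p z z' ≤ max (p x x) (p y y)`. The second
estimate, applied to points `y k` with `p (y k) (y k) → ρ_p`, makes their orbit limits a Cauchy
sequence whose limit lies in `X_p`; the first makes the orbit limit of a point of `X_p` a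
fixed point.
-/

open Filter Topology

section

variable {X : Type*} {p : X → X → ℝ}

/-- Convergence in the induced metric `p^s`. -/
def PSConverges (p : X → X → ℝ) (x : ℕ → X) (a : X) : Prop :=
  PConverges p x a ∧ Tendsto (fun n => p (x n) (x n)) atTop (𝓝 (p a a))

lemma PSConverges.tendsto_two_mul_sub_sub (hp : IsPartialMetric p) {x : ℕ → X} {a : X}
    (h : PSConverges p x a) :
    Tendsto (fun n => 2 * p (x n) a - p (x n) (x n) - p a a) atTop (𝓝 0) := by
  have hxa : Tendsto (fun n => p (x n) a) atTop (𝓝 (p a a)) :=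
    h.1.congr fun n => hp.symm _ _
  have hlim := ((hxa.const_mul 2).sub h.2).sub (tendsto_const_nhds (x := p a a))
  rwa [show 2 * p a a - p a a - p a a = 0 by ring] at hlim

lemma PComplete.exists_psConverges (hcomp : PComplete p) {x : ℕ → X} (hx : PCauchy p x) :
    ∃ a, PSConverges p x a := by
  obtain ⟨a, hconv, hdouble⟩ := hcomp x hx
  exact ⟨a, hconv, hdouble.comp tendsto_atTop_diagonal⟩

lemma IsPartialMetric.le_of_psConverges (hp : IsPartialMetric p) {x y : ℕ → X} {a b : X}
    (hx : PSConverges p x a) (hy : PSConverges p y b) {c : ℕ → ℝ} {C : ℝ}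
    (hc : Tendsto c atTop (𝓝 C)) (hle : ∀ n, p (x n) (y n) ≤ c n) : p a b ≤ C := by
  have hbound : ∀ n, p a b ≤ p a (x n) + c n + p b (y n) - p (x n) (x n) - p (y n) (y n) := by
    intro n
    have h₁ := hp.triangle a (x n) b
    have h₂ := hp.triangle (x n) (y n) b
    linarith [hle n, hp.symm (y n) b]
  have hlim := (((hx.1.add hc).add hy.1).sub hx.2).sub hy.2
  refine le_of_tendsto_of_tendsto' tendsto_const_nhds hlim hbound |>.trans_eq ?_
  ring

structure IsMaxContraction (p : X → X → ℝ) (α : ℝ) (T : X → X) : Prop where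
  nonneg : 0 ≤ α
  lt_one : α < 1
  le : ∀ x y, p (T x) (T y) ≤ max (α * p x y) (max (p x x) (p y y))

namespace IsMaxContraction

variable {α : ℝ} {T : X → X}

lemma self_apply_le (hT : IsMaxContraction p α T) (hp : IsPartialMetric p) (x : X) :
    p (T x) (T x) ≤ p x x := by
  have h := hT.le x x
  rw [max_self] at h
  exact h.trans (max_le (mul_le_of_le_one_left (hp.nonneg x x) hT.lt_one.le) le_rfl)

lemma antitone_self_iterate (hT : IsMaxContraction p α T) (hp : IsPartialMetric p) (x : X) :
    Antitone fun n => p (T^[n] x) (T^[n] x) :=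
  antitone_nat_of_succ_le fun n => by
    simpa only [Function.iterate_succ_apply'] using hT.self_apply_le hp (T^[n] x)

lemma iterate_le (hT : IsMaxContraction p α T) (hp : IsPartialMetric p) (n : ℕ) (x y : X) :
    p (T^[n] x) (T^[n] y) ≤ max (α ^ n * p x y) (max (p x x) (p y y)) := by
  set M := max (p x x) (p y y)
  have hM : 0 ≤ M := le_max_of_le_left (hp.nonneg x x)
  induction n with
  | zero => simp
  | succ n ih =>
    have hx : p (T^[n] x) (T^[n] x) ≤ M :=
      (hT.antitone_self_iterate hp x n.zero_le).trans (le_max_left _ _)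
    have hy : p (T^[n] y) (T^[n] y) ≤ M :=
      (hT.antitone_self_iterate hp y n.zero_le).trans (le_max_right _ _)
    rw [Function.iterate_succ_apply', Function.iterate_succ_apply']
    calc p (T (T^[n] x)) (T (T^[n] y))
        ≤ max (α * p (T^[n] x) (T^[n] y)) M := (hT.le _ _).trans (max_le_max le_rfl (max_le hx hy))
      _ ≤ max (α * max (α ^ n * p x y) M) M :=
          max_le_max (mul_le_mul_of_nonneg_left ih hT.nonneg) le_rfl
      _ = max (α ^ (n + 1) * p x y) M := by
          rw [mul_max_of_nonneg _ _ hT.nonneg, max_assoc,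
            max_eq_right (mul_le_of_le_one_left hM hT.lt_one.le), pow_succ', mul_assoc]

lemma exists_bound_iterate (hT : IsMaxContraction p α T) (hp : IsPartialMetric p) (x : X) :
    ∃ C, ∀ k l, k ≤ l → p (T^[k] x) (T^[l] x) ≤ C := by
  have h1α : 0 < 1 - α := sub_pos.mpr hT.lt_one
  -- `C = p x (T x) + p x x + α * C` is what the induction on `p x (T^[b] x) ≤ C` needs
  set C := (p x (T x) + p x x) / (1 - α)
  have hC : C * (1 - α) = p x (T x) + p x x := div_mul_cancel₀ _ h1α.ne'
  have hxC : p x x ≤ C :=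
    (le_add_of_nonneg_left (hp.nonneg _ _)).trans
      (le_div_self (add_nonneg (hp.nonneg _ _) (hp.nonneg _ _)) h1α (by linarith [hT.nonneg]))
  have hαC : 0 ≤ α * C := mul_nonneg hT.nonneg (hxC.trans' (hp.nonneg x x))
  have hdiag : ∀ b, p (T^[b] x) (T^[b] x) ≤ p x x :=
    fun b => hT.antitone_self_iterate hp x b.zero_le
  have hstart : ∀ b, p x (T^[b] x) ≤ C := by
    intro b
    induction b with
    | zero => exact hxC
    | succ b ih =>
      have htri := hp.triangle x (T x) (T^[b + 1] x)
      have hstep : p (T x) (T^[b + 1] x) ≤ α * C + p x x := by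
        rw [Function.iterate_succ_apply']
        refine (hT.le _ _).trans (max_le ?_ (max_le ?_ ?_))
        · linarith [mul_le_mul_of_nonneg_left ih hT.nonneg, hp.nonneg x x]
        · linarith
        · linarith [hdiag b]
      linarith [hp.nonneg (T x) (T x)]
  refine ⟨C, fun k l hkl => ?_⟩
  obtain ⟨b, rfl⟩ := Nat.exists_eq_add_of_le hkl
  rw [Function.iterate_add_apply]
  refine (hT.iterate_le hp k x (T^[b] x)).trans (max_le ?_ (max_le hxC ((hdiag b).trans hxC)))
  exact (mul_le_of_le_one_left (hp.nonneg _ _) (pow_le_one₀ hT.nonneg hT.lt_one.le)).trans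
    (hstart b)

lemma iterate_le_half (hT : IsMaxContraction p α T) (hp : IsPartialMetric p) {x : X} {C : ℝ}
    (hC : ∀ k l, k ≤ l → p (T^[k] x) (T^[l] x) ≤ C) {n m : ℕ} (hnm : n ≤ m) :
    p (T^[n] x) (T^[m] x) ≤ max (α ^ (n / 2) * C) (p (T^[n / 2] x) (T^[n / 2] x)) := by
  have hn : T^[n] x = T^[n - n / 2] (T^[n / 2] x) := by
    rw [← Function.iterate_add_apply]; congr 1; omega
  have hm : T^[m] x = T^[n - n / 2] (T^[m - (n - n / 2)] x) := by
    rw [← Function.iterate_add_apply]; congr 1; omega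
  rw [hn, hm]
  refine (hT.iterate_le hp _ _ _).trans (max_le ?_ (max_le (le_max_right _ _) ?_))
  · exact le_max_of_le_left <| mul_le_mul
      (pow_le_pow_of_le_one hT.nonneg hT.lt_one.le (by omega)) (hC _ _ (by omega))
      (hp.nonneg _ _) (pow_nonneg hT.nonneg _)
  · exact (hT.antitone_self_iterate hp x (by omega : n / 2 ≤ m - (n - n / 2))).trans
      (le_max_right _ _)

lemma pCauchy_iterate (hT : IsMaxContraction p α T) (hp : IsPartialMetric p) (x : X) :
    PCauchy p fun n => T^[n] x := by
  set d := fun n => p (T^[n] x) (T^[n] x)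
  have hd : Tendsto d atTop (𝓝 (⨅ n, d n)) := tendsto_atTop_ciInf
    (hT.antitone_self_iterate hp x) ⟨0, by rintro _ ⟨n, rfl⟩; exact hp.nonneg _ _⟩
  have hc : 0 ≤ ⨅ n, d n := le_ciInf fun n => hp.nonneg _ _
  obtain ⟨C, hC⟩ := hT.exists_bound_iterate hp x
  have hbounds : ∀ n m, d (min n m) ≤ p (T^[n] x) (T^[m] x) ∧
      p (T^[n] x) (T^[m] x) ≤ max (α ^ (min n m / 2) * C) (d (min n m / 2)) := by
    intro n m
    rcases le_total n m with h | h
    · rw [min_eq_left h]; exact ⟨hp.self_le _ _, hT.iterate_le_half hp hC h⟩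
    · rw [min_eq_right h, hp.symm]; exact ⟨hp.self_le _ _, hT.iterate_le_half hp hC h⟩
  have htail : Tendsto (fun k => max (α ^ k * C) (d k)) atTop (𝓝 (⨅ n, d n)) := by
    have h := ((tendsto_pow_atTop_nhds_zero_of_lt_one hT.nonneg hT.lt_one).mul_const C).max hd
    rwa [zero_mul, max_eq_right hc] at h
  have hmin : Tendsto (fun mn : ℕ × ℕ => min mn.1 mn.2) atTop atTop := by
    rw [← prod_atTop_atTop_eq]
    exact tendsto_inf_atTop _ tendsto_fst tendsto_snd
  exact ⟨_, tendsto_of_tendsto_of_tendsto_of_le_of_le (hd.comp hmin)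
    ((htail.comp (Nat.tendsto_div_const_atTop two_ne_zero)).comp hmin)
    (fun mn => (hbounds mn.1 mn.2).1) (fun mn => (hbounds mn.1 mn.2).2)⟩

lemma exists_psConverges_iterate (hT : IsMaxContraction p α T) (hp : IsPartialMetric p)
    (hcomp : PComplete p) (x : X) : ∃ z, PSConverges p (fun n => T^[n] x) z :=
  hcomp.exists_psConverges (hT.pCauchy_iterate hp x)

lemma le_max_of_psConverges (hT : IsMaxContraction p α T) (hp : IsPartialMetric p)
    {x y a b : X} (hx : PSConverges p (fun n => T^[n] x) a)
    (hy : PSConverges p (fun n => T^[n] y) b) : p a b ≤ max (p x x) (p y y) := by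
  have hc := ((tendsto_pow_atTop_nhds_zero_of_lt_one hT.nonneg hT.lt_one).mul_const (p x y)).max
    (tendsto_const_nhds (x := max (p x x) (p y y)))
  rw [zero_mul, max_eq_right (le_max_of_le_left (hp.nonneg x x))] at hc
  exact hp.le_of_psConverges hx hy hc (hT.iterate_le hp · x y)

lemma apply_le_of_psConverges (hT : IsMaxContraction p α T) (hp : IsPartialMetric p)
    {x z : X} (hz : PSConverges p (fun n => T^[n] x) z) : p z (T z) ≤ p z z := by
  have hshift : PSConverges p (fun n => T^[n + 1] x) z :=
    ⟨hz.1.comp (tendsto_add_atTop_nat 1), hz.2.comp (tendsto_add_atTop_nat 1)⟩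
  have hconst : PSConverges p (fun _ => T z) (T z) := ⟨tendsto_const_nhds, tendsto_const_nhds⟩
  have hxz : Tendsto (fun n => p (T^[n] x) z) atTop (𝓝 (p z z)) :=
    hz.1.congr fun n => hp.symm _ _
  have hc := (hxz.const_mul α).max (hz.2.max (tendsto_const_nhds (x := p z z)))
  rw [max_self, max_eq_right (mul_le_of_le_one_left (hp.nonneg z z) hT.lt_one.le)] at hc
  refine hp.le_of_psConverges hshift hconst hc fun n => ?_
  rw [Function.iterate_succ_apply']
  exact hT.le _ _

lemma apply_eq_of_psConverges (hT : IsMaxContraction p α T) (hp : IsPartialMetric p)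
    {x z : X} (hz : PSConverges p (fun n => T^[n] x) z) (hmin : p z z ≤ p (T z) (T z)) :
    T z = z := by
  have h₁ : p z (T z) = p z z := le_antisymm (hT.apply_le_of_psConverges hp hz) (hp.self_le _ _)
  have h₂ : p (T z) (T z) = p z z := le_antisymm (hT.self_apply_le hp z) hmin
  exact (hp.eq_of z (T z) h₁.symm (h₁.trans h₂.symm)).symm

lemma le_max_of_isFixedPt (hT : IsMaxContraction p α T) (hp : IsPartialMetric p) {v w : X}
    (hv : T v = v) (hw : T w = w) : p v w ≤ max (p v v) (p w w) := by
  have h := hT.le v w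
  rw [hv, hw] at h
  rcases le_max_iff.mp h with h | h
  · have : p v w ≤ 0 := by nlinarith [hT.lt_one, hp.nonneg v w]
    exact this.trans (le_max_of_le_left (hp.nonneg v v))
  · exact h

variable {ρ : ℝ}

lemma eq_of_isFixedPt (hT : IsMaxContraction p α T) (hp : IsPartialMetric p)
    (hρ : ∀ a b, ρ ≤ p a b) {v w : X} (hv : T v = v) (hw : T w = w) (hvρ : p v v = ρ)
    (hwρ : p w w = ρ) : v = w := by
  have h := hT.le_max_of_isFixedPt hp hv hw
  rw [hvρ, hwρ, max_self] at h
  have hvw : p v w = ρ := le_antisymm h (hρ v w)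
  exact hp.eq_of v w (hvρ.trans hvw.symm) (hvw.trans hwρ.symm)

lemma exists_self_eq (hT : IsMaxContraction p α T) (hp : IsPartialMetric p)
    (hcomp : PComplete p) (hρ : ∀ a b, ρ ≤ p a b) {y : ℕ → X}
    (hy : Tendsto (fun n => p (y n) (y n)) atTop (𝓝 ρ)) : ∃ u, p u u = ρ := by
  choose z hz using fun k => hT.exists_psConverges_iterate hp hcomp (y k)
  have hmax := (hy.comp tendsto_fst).max (hy.comp tendsto_snd)
  rw [max_self, prod_atTop_atTop_eq] at hmax
  have hcauchy : Tendsto (fun jl : ℕ × ℕ => p (z jl.1) (z jl.2)) atTop (𝓝 ρ) :=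
    tendsto_of_tendsto_of_tendsto_of_le_of_le tendsto_const_nhds hmax (fun _ => hρ _ _)
      fun jl => hT.le_max_of_psConverges hp (hz jl.1) (hz jl.2)
  obtain ⟨u, -, hu⟩ := hcomp z ⟨ρ, hcauchy⟩
  exact ⟨u, tendsto_nhds_unique hu hcauchy⟩

lemma exists_fixedPt_self_eq (hT : IsMaxContraction p α T) (hp : IsPartialMetric p)
    (hcomp : PComplete p) (hρ : ∀ a b, ρ ≤ p a b) {x : X} (hx : p x x = ρ) :
    ∃ u, T u = u ∧ p u u = ρ := by
  obtain ⟨z, hz⟩ := hT.exists_psConverges_iterate hp hcomp x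
  have hzρ : p z z = ρ :=
    le_antisymm (hx ▸ (hT.antitone_self_iterate hp x).le_of_tendsto hz.2 0) (hρ z z)
  exact ⟨z, hT.apply_eq_of_psConverges hp hz (hzρ ▸ hρ _ _), hzρ⟩

lemma psConverges_iterate_of_isFixedPt (hT : IsMaxContraction p α T) (hp : IsPartialMetric p)
    (hρ : ∀ a b, ρ ≤ p a b) {x u : X} (hx : p x x = ρ) (hu : T u = u) (huρ : p u u = ρ) :
    PSConverges p (fun n => T^[n] x) u := by
  have hdiag : ∀ n, p (T^[n] x) (T^[n] x) = ρ := fun n =>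
    le_antisymm (hx ▸ hT.antitone_self_iterate hp x n.zero_le) (hρ _ _)
  have hupper : ∀ n, p u (T^[n] x) ≤ max (α ^ n * p u x) ρ := fun n => by
    simpa only [Function.iterate_fixed hu, huρ, hx, max_self] using hT.iterate_le hp n u x
  have hlim := ((tendsto_pow_atTop_nhds_zero_of_lt_one hT.nonneg hT.lt_one).mul_const
    (p u x)).max (tendsto_const_nhds (x := ρ))
  rw [zero_mul, max_eq_right (hx ▸ hp.nonneg x x)] at hlim
  refine ⟨?_, ?_⟩
  · rw [PConverges, huρ]
    exact tendsto_of_tendsto_of_tendsto_of_le_of_le tendsto_const_nhds hlim (fun _ => hρ _ _)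
      hupper
  · simpa only [hdiag, huρ] using tendsto_const_nhds

end IsMaxContraction

end

/-- the generalized contraction principle of Ilić, Pavlović and
Rakočević on a complete partial metric space. -/
theorem ilic_pavlovic_rakocevic {X : Type*} [Nonempty X] (p : X → X → ℝ)
    (hp : IsPartialMetric p) (hcomp : PComplete p)
    (α : ℝ) (hα : α ∈ Set.Ico (0:ℝ) 1) (T : X → X)
    (hcontr : ∀ x y, p (T x) (T y) ≤ max (α * p x y) (max (p x x) (p y y))) :
    (({x : X | p x x = sInf {r : ℝ | ∃ x y : X, r = p x y}} : Set X).Nonempty) ∧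
    (∃ u ∈ {x : X | p x x = sInf {r : ℝ | ∃ x y : X, r = p x y}},
      T u = u ∧
      (∀ v ∈ {x : X | p x x = sInf {r : ℝ | ∃ x y : X, r = p x y}},
        T v = v → v = u) ∧
      (∀ x ∈ {x : X | p x x = sInf {r : ℝ | ∃ x y : X, r = p x y}},
        Tendsto (fun n =>
          2 * p (T^[n] x) u - p (T^[n] x) (T^[n] x) - p u u) atTop (𝓝 0))) := by
  have hT : IsMaxContraction p α T := ⟨hα.1, hα.2, hcontr⟩
  set S := {r : ℝ | ∃ x y : X, r = p x y}
  have hS : S.Nonempty := ⟨_, Classical.arbitrary X, Classical.arbitrary X, rfl⟩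
  have hSbdd : BddBelow S := ⟨0, by rintro _ ⟨a, b, rfl⟩; exact hp.nonneg a b⟩
  have hρ : ∀ a b, sInf S ≤ p a b := fun a b => csInf_le hSbdd ⟨a, b, rfl⟩
  obtain ⟨r, -, hr, hrS⟩ := exists_seq_tendsto_sInf hS hSbdd
  choose y y' hyy' using hrS
  have hy : Tendsto (fun n => p (y n) (y n)) atTop (𝓝 (sInf S)) :=
    tendsto_of_tendsto_of_tendsto_of_le_of_le tendsto_const_nhds hr (fun _ => hρ _ _)
      fun n => (hp.self_le _ _).trans (hyy' n).ge
  obtain ⟨x, hx⟩ := hT.exists_self_eq hp hcomp hρ hy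
  obtain ⟨u, hu, huρ⟩ := hT.exists_fixedPt_self_eq hp hcomp hρ hx
  exact ⟨⟨x, hx⟩, u, huρ, hu, fun v hv hvu => hT.eq_of_isFixedPt hp hρ hvu hu hv huρ,
    fun x hx => (hT.psConverges_iterate_of_isFixedPt hp hρ hx hu huρ).tendsto_two_mul_sub_sub hp⟩
end
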